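/- The derivative recursions characterize the explicit polynomials L_k: if P_0, P_1, ..., P_n ∈ ℝ[x_1, ..., x_d] satisfy P_0 = 1, P_k has zero constant term for every k ∈ {1, ..., n}, ∂P_k/∂x_1 = P_{k-1} for every k ∈ {1, ..., n}, and ∂P_k/∂x_s = ∑_{i=2}^{k} a_{i,s} P_{k-i} for every s ∈ {2, ..., d} and k ∈ {1, ..., n}, then P_k = L_k for every k ∈ {0, 1, ..., n}. -/

import Mathlib

/-!
`L_k` is the coefficient of `t ^ k` in `exp (x₁ t + ∑_{s,j} a_{j,s} x_s t ^ j)`. Differentiating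
under the exponential shows that a derivation `D` sends it to `∑_i L_{k - w_i} D y_i`, where
`y_i t ^ w_i` runs over the summands of the exponent; for the partial derivatives this is exactly
the recursion imposed on `P_k`. Over `ℝ` a polynomial is determined by its constant term and its
partial derivatives, so `P_k = L_k` follows by strong induction on `k`.
-/

/-- The explicit breadth-one basis polynomial `L_k` (Corollary 3.4):
`L_k = ∑ (1/γ₁!) (∏_{s=2}^d ∏_{j=2}^n a_{j,s}^{γ_{s,j}}/γ_{s,j}!) x₁^{γ₁} ∏_{s=2}^d x_s^{|γ_s|}`,
the sum being over `γ₁ ∈ ℕ` and `γ_{s,j} ∈ ℕ` with `γ₁ + ∑_{s,j} j·γ_{s,j} = k`.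
Variables `x₁,…,x_d` are the coordinates `0,…,d-1` of `Fin d`; the index `s : Fin (d-1)`
stands for the variable `x_{s+2}` and `j : Fin (n-1)` for the degree weight `j+2`. -/
noncomputable def Lpoly (d n : ℕ) (hd : 1 ≤ d) (a : ℕ → ℕ → ℝ) (k : ℕ) :
    MvPolynomial (Fin d) ℝ :=
  ∑ g1 ∈ Finset.range (k + 1),
    ∑ g ∈ (Finset.Icc (0 : Fin (d - 1) → Fin (n - 1) → ℕ) fun _ _ => k).filter
        (fun g => g1 + ∑ s, ∑ j, (j.val + 2) * g s j = k),
      MvPolynomial.C ((1 / (g1.factorial : ℝ)) *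
          ∏ s, ∏ j, a (j.val + 2) (s.val + 2) ^ g s j / ((g s j).factorial : ℝ)) *
        MvPolynomial.X (⟨0, hd⟩ : Fin d) ^ g1 *
        ∏ s : Fin (d - 1),
          MvPolynomial.X (⟨s.val + 1, by have := s.isLt; omega⟩ : Fin d) ^ (∑ j, g s j)

open Finset MvPolynomial

lemma Derivation.leibniz_prod {R A M ι : Type*} [CommSemiring R] [CommSemiring A] [Algebra R A]
    [AddCommMonoid M] [Module A M] [Module R M] [DecidableEq ι]
    (D : Derivation R A M) (s : Finset ι) (f : ι → A) :
    D (∏ i ∈ s, f i) = ∑ i ∈ s, (∏ j ∈ s.erase i, f j) • D (f i) := by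
  induction s using Finset.induction_on with
  | empty => simp
  | insert a s ha ih =>
    rw [prod_insert ha, D.leibniz, ih, sum_insert ha, erase_insert ha, smul_sum, add_comm]
    congr 1
    refine sum_congr rfl fun i hi => ?_
    rw [erase_insert_of_ne (ne_of_mem_of_not_mem hi ha).symm,
      prod_insert fun h => ha (mem_of_mem_erase h), smul_smul]

lemma MvPolynomial.eq_of_constantCoeff_eq_of_pderiv_eq {R σ : Type*} [CommSemiring R]
    [IsAddTorsionFree R] {p q : MvPolynomial σ R} (h0 : constantCoeff p = constantCoeff q)
    (hD : ∀ i, pderiv i p = pderiv i q) : p = q := by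
  classical
  ext m
  rcases eq_or_ne m 0 with rfl | hm
  · exact h0
  obtain ⟨i, hi⟩ := Finsupp.ne_iff.mp hm
  have hm : m - Finsupp.single i 1 + Finsupp.single i 1 = m :=
    tsub_add_cancel_of_le (Finsupp.single_le_iff.mpr (Nat.one_le_iff_ne_zero.mpr hi))
  have := congr_arg (coeff (m - Finsupp.single i 1)) (hD i)
  rw [coeff_pderiv, coeff_pderiv, hm, ← Nat.cast_succ, mul_comm, ← nsmul_eq_mul, mul_comm,
    ← nsmul_eq_mul] at this
  exact nsmul_right_injective (Nat.succ_ne_zero _) this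

section DividedPower

variable (K : Type*) {A M : Type*} [Field K] [CommSemiring A] [Algebra K A]

noncomputable def divPow (y : A) (m : ℕ) : A := (m.factorial : K)⁻¹ • y ^ m

variable {K}

@[simp]
lemma divPow_zero (y : A) : divPow K y 0 = 1 := by
  simp [divPow]

lemma Derivation.map_divPow_succ [CharZero K] [AddCommMonoid M] [Module A M] [Module K M]
    [IsScalarTower K A M] (D : Derivation K A M) (y : A) (m : ℕ) :
    D (divPow K y (m + 1)) = divPow K y m • D y := by
  have hm : ((m + 1 : ℕ) : K) ≠ 0 := Nat.cast_ne_zero.mpr m.succ_ne_zero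
  rw [divPow, divPow, D.map_smul, D.leibniz_pow, Nat.add_sub_cancel, Nat.factorial_succ,
    Nat.cast_mul, mul_inv, ← Nat.cast_smul_eq_nsmul K, smul_smul, mul_right_comm,
    inv_mul_cancel₀ hm, one_mul, smul_assoc]

end DividedPower

section WeightFiber

variable {ι : Type*} [Fintype ι]

def weightFiber [DecidableEq ι] (w : ι → ℕ) (k : ℕ) : Finset (ι → ℕ) :=
  {γ ∈ Iic fun _ => k | ∑ i, w i * γ i = k}

variable {w : ι → ℕ} {k : ℕ}

lemma mul_le_weight (γ : ι → ℕ) (i : ι) : w i * γ i ≤ ∑ j, w j * γ j :=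
  single_le_sum (f := fun j => w j * γ j) (fun _ _ => Nat.zero_le _) (mem_univ i)

variable [DecidableEq ι]

lemma mem_weightFiber (hw : ∀ i, 0 < w i) {γ : ι → ℕ} :
    γ ∈ weightFiber w k ↔ ∑ i, w i * γ i = k := by
  refine ⟨fun h => (mem_filter.mp h).2, fun h => mem_filter.mpr ⟨mem_Iic.mpr fun i => ?_, h⟩⟩
  exact h ▸ (Nat.le_mul_of_pos_left _ (hw i)).trans (mul_le_weight γ i)

lemma weight_add_single (γ : ι → ℕ) (i : ι) :
    ∑ j, w j * (γ + Pi.single i 1 : ι → ℕ) j = ∑ j, w j * γ j + w i := by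
  simp [mul_add, sum_add_distrib, Pi.single_apply]

lemma sum_weightFiber_sub_single {M : Type*} [AddCommMonoid M] (hw : ∀ i, 0 < w i) (i : ι)
    (F : (ι → ℕ) → M) :
    ∑ γ ∈ weightFiber w k with γ i ≠ 0, F (γ - Pi.single i 1)
      = if w i ≤ k then ∑ γ ∈ weightFiber w (k - w i), F γ else 0 := by
  have hle {γ : ι → ℕ} (hγ : γ i ≠ 0) : Pi.single i 1 ≤ γ := by
    intro j
    rcases eq_or_ne j i with rfl | hj
    · simpa [Nat.one_le_iff_ne_zero] using hγ
    · simp [hj]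
  split_ifs with hik
  · refine sum_nbij' (· - Pi.single i 1) (· + Pi.single i (1 : ℕ)) ?_ ?_ ?_ ?_ fun _ _ => rfl
    · intro γ hγ
      obtain ⟨hγk, hγi⟩ := mem_filter.mp hγ
      have := weight_add_single (w := w) (γ - Pi.single i 1) i
      rw [tsub_add_cancel_of_le (hle hγi), (mem_weightFiber hw).mp hγk] at this
      exact (mem_weightFiber hw).mpr (by omega)
    · intro γ hγ
      refine mem_filter.mpr ⟨(mem_weightFiber hw).mpr ?_, by simp⟩
      rw [weight_add_single, (mem_weightFiber hw).mp hγ]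
      omega
    · exact fun γ hγ => tsub_add_cancel_of_le (hle (mem_filter.mp hγ).2)
    · exact fun γ _ => add_tsub_cancel_right γ _
  · refine sum_eq_zero fun γ hγ => absurd ?_ hik
    obtain ⟨hγk, hγi⟩ := mem_filter.mp hγ
    calc w i ≤ w i * γ i := Nat.le_mul_of_pos_right _ (Nat.pos_of_ne_zero hγi)
      _ ≤ ∑ j, w j * γ j := mul_le_weight γ i
      _ = k := (mem_weightFiber hw).mp hγk

end WeightFiber

section ExpCoeff

variable (K : Type*) {A ι : Type*} [Field K] [CommSemiring A] [Algebra K A] [Fintype ι]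
  [DecidableEq ι]

/-- The coefficient of `t ^ k` in `exp (∑ i, y i * t ^ w i)`. -/
noncomputable def expCoeff (w : ι → ℕ) (y : ι → A) (k : ℕ) : A :=
  ∑ γ ∈ weightFiber w k, ∏ i, divPow K (y i) (γ i)

variable {K} {w : ι → ℕ} {y : ι → A}

lemma expCoeff_zero : expCoeff K w y 0 = 1 := by
  have : weightFiber w 0 = {0} := by
    ext γ
    simp only [weightFiber, mem_filter, mem_Iic, mem_singleton]
    constructor
    · exact fun h => le_antisymm h.1 fun _ => Nat.zero_le _
    · rintro rfl
      simp
  simp [expCoeff, this]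

lemma map_expCoeff_eq_zero {B : Type*} [CommSemiring B] [Algebra K B] (φ : A →ₐ[K] B)
    (hφ : ∀ i, φ (y i) = 0) {k : ℕ} (hk : k ≠ 0) : φ (expCoeff K w y k) = 0 := by
  rw [expCoeff, map_sum]
  refine sum_eq_zero fun γ hγ => ?_
  obtain ⟨i, hi⟩ : ∃ i, γ i ≠ 0 := by
    by_contra! h
    simp [weightFiber, h, eq_comm, hk] at hγ
  rw [map_prod]
  refine prod_eq_zero (mem_univ i) ?_
  rw [divPow, map_smul, map_pow, hφ, zero_pow hi, smul_zero]

variable [CharZero K] {M : Type*} [AddCommMonoid M] [Module A M] [Module K M]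
  [IsScalarTower K A M] (D : Derivation K A M)

lemma Derivation.map_prod_divPow (γ : ι → ℕ) :
    D (∏ i, divPow K (y i) (γ i))
      = ∑ i with γ i ≠ 0, (∏ j, divPow K (y j) ((γ - Pi.single i 1 : ι → ℕ) j)) • D (y i) := by
  rw [D.leibniz_prod, sum_filter]
  refine sum_congr rfl fun i _ => ?_
  by_cases hi : γ i = 0
  · simp [hi]
  obtain ⟨m, hm⟩ := Nat.exists_eq_succ_of_ne_zero hi
  rw [if_pos hi, hm, D.map_divPow_succ, smul_smul, ← mul_prod_erase univ _ (mem_univ i),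
    mul_comm]
  congr 2
  · simp [hm]
  · refine prod_congr rfl fun j hj => ?_
    simp [ne_of_mem_erase hj]

lemma Derivation.map_expCoeff (hw : ∀ i, 0 < w i) (k : ℕ) :
    D (expCoeff K w y k) = ∑ i with w i ≤ k, expCoeff K w y (k - w i) • D (y i) := by
  simp only [expCoeff, map_sum, D.map_prod_divPow, sum_filter]
  rw [sum_comm]
  refine sum_congr rfl fun i _ => ?_
  rw [← sum_filter, ← sum_smul, sum_weightFiber_sub_single hw i fun γ => ∏ j, divPow K (y j) (γ j)]
  split_ifs <;> simp

end ExpCoeff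

lemma sum_fin_sub_one_ite_eq_sum_Icc {M : Type*} [AddCommMonoid M] {n k : ℕ} (hk : k ≤ n)
    (f : ℕ → M) :
    ∑ j : Fin (n - 1), (if j.val + 2 ≤ k then f (j.val + 2) else 0) = ∑ i ∈ Icc 2 k, f i := by
  have hrange : {j ∈ range (n - 1) | j + 2 ≤ k} = range (k - 1) := by
    ext j
    simp only [mem_filter, mem_range]
    omega
  rw [Fin.sum_univ_eq_sum_range (fun j => if j + 2 ≤ k then f (j + 2) else 0), ← sum_filter,
    hrange, ← Ico_add_one_right_eq_Icc, sum_Ico_eq_sum_range, show k + 1 - 2 = k - 1 by omega]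
  exact sum_congr rfl fun j _ => by rw [add_comm]

section Lpoly

/-- `L_k` is `expCoeff` for the exponent `x₁ t + ∑_{s,j} a_{j+2,s+2} x_{s+2} t ^ (j+2)`:
`none` indexes its first summand, `some (s, j)` the others. -/
def lpolyWeight (d n : ℕ) : Option (Fin (d - 1) × Fin (n - 1)) → ℕ
  | none => 1
  | some (_, j) => j + 2

lemma lpolyWeight_pos {d n : ℕ} : ∀ i, 0 < lpolyWeight d n i
  | none => Nat.one_pos
  | some _ => Nat.succ_pos _

noncomputable def lpolyGen (d n : ℕ) (hd : 1 ≤ d) (a : ℕ → ℕ → ℝ) :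
    Option (Fin (d - 1) × Fin (n - 1)) → MvPolynomial (Fin d) ℝ
  | none => X ⟨0, hd⟩
  | some (s, j) => C (a (j + 2) (s + 2)) * X ⟨s + 1, Nat.add_lt_of_lt_sub s.isLt⟩

lemma Lpoly_eq_expCoeff {d n : ℕ} (hd : 1 ≤ d) (a : ℕ → ℕ → ℝ) (k : ℕ) :
    Lpoly d n hd a k = expCoeff ℝ (lpolyWeight d n) (lpolyGen d n hd a) k := by
  let e : ℕ × (Fin (d - 1) → Fin (n - 1) → ℕ) ≃ (Option (Fin (d - 1) × Fin (n - 1)) → ℕ) :=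
    { toFun := fun x o => o.elim x.1 fun p => x.2 p.1 p.2
      invFun := fun γ => (γ none, fun s j => γ (some (s, j)))
      left_inv := fun _ => rfl
      right_inv := fun γ => funext fun o => by cases o <;> rfl }
  simp only [Lpoly, sum_filter]
  rw [← sum_product', ← sum_filter, expCoeff]
  refine sum_equiv e (fun x => ?_) fun x _ => ?_
  · simp [e, Equiv.coe_fn_mk, Option.elim, weightFiber, lpolyWeight, Fintype.sum_option,
      Fintype.sum_prod_type, Pi.le_def, Option.forall]
  · simp only [e, Equiv.coe_fn_mk, Fintype.prod_option, Fintype.prod_prod_type, Option.elim,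
      divPow, lpolyGen, smul_eq_C_mul, mul_pow, prod_mul_distrib, ← prod_pow_eq_pow_sum,
      ← map_pow, ← map_prod, map_mul, div_eq_mul_inv, one_mul]
    ring

variable {d n : ℕ} (hd : 1 ≤ d) (a : ℕ → ℕ → ℝ)

lemma Lpoly_zero : Lpoly d n hd a 0 = 1 := by
  rw [Lpoly_eq_expCoeff, expCoeff_zero]

lemma constantCoeff_Lpoly {k : ℕ} (hk : k ≠ 0) : constantCoeff (Lpoly d n hd a k) = 0 := by
  have hgen : ∀ i, aeval (0 : Fin d → ℝ) (lpolyGen d n hd a i) = 0 := by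
    rintro (_ | ⟨s, j⟩) <;> simp [lpolyGen]
  simpa [Lpoly_eq_expCoeff] using map_expCoeff_eq_zero (aeval 0) hgen hk

lemma pderiv_Lpoly_zero {k : ℕ} (hk : k ≠ 0) :
    pderiv ⟨0, hd⟩ (Lpoly d n hd a k) = Lpoly d n hd a (k - 1) := by
  rw [Lpoly_eq_expCoeff, Lpoly_eq_expCoeff, Derivation.map_expCoeff _ lpolyWeight_pos, sum_filter,
    Fintype.sum_option]
  simp [lpolyWeight, lpolyGen, pderiv_X, Nat.one_le_iff_ne_zero.mpr hk]

lemma pderiv_Lpoly_succ (t : Fin (d - 1)) {k : ℕ} (hk : k ≤ n) :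
    pderiv ⟨t + 1, Nat.add_lt_of_lt_sub t.isLt⟩ (Lpoly d n hd a k)
      = ∑ i ∈ Icc 2 k, a i (t + 2) • Lpoly d n hd a (k - i) := by
  rw [Lpoly_eq_expCoeff, Derivation.map_expCoeff _ lpolyWeight_pos, sum_filter,
    Fintype.sum_option, Fintype.sum_prod_type, sum_eq_single t, ← sum_fin_sub_one_ite_eq_sum_Icc hk]
  · simp [lpolyWeight, lpolyGen, Lpoly_eq_expCoeff, pderiv_X, smul_eq_C_mul, mul_comm]
  · intro s _ hst
    simp [lpolyGen, pderiv_X, Fin.val_inj, hst]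
  · simp

end Lpoly

/-- The derivative recursions characterize the explicit polynomials `L_k`:
if `P_0 = 1`, each `P_k` (`1 ≤ k ≤ n`) has zero constant term, `∂P_k/∂x₁ = P_{k-1}` for
`1 ≤ k ≤ n`, and `∂P_k/∂x_s = ∑_{i=2}^k a_{i,s} P_{k-i}` for `2 ≤ s ≤ d`, `1 ≤ k ≤ n`,
then `P_k = L_k` for every `k ≤ n`. -/
theorem Lpoly_unique_of_recursions
    (d n : ℕ) (hd : 2 ≤ d) (a : ℕ → ℕ → ℝ)
    (P : ℕ → MvPolynomial (Fin d) ℝ)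
    (hP0 : P 0 = 1)
    (hPconst : ∀ k : ℕ, 1 ≤ k → k ≤ n → MvPolynomial.constantCoeff (P k) = 0)
    (hPx1 : ∀ k : ℕ, 1 ≤ k → k ≤ n →
      MvPolynomial.pderiv (⟨0, by omega⟩ : Fin d) (P k) = P (k - 1))
    (hPxs : ∀ s : Fin d, 1 ≤ s.val → ∀ k : ℕ, 1 ≤ k → k ≤ n →
      MvPolynomial.pderiv s (P k)
        = ∑ i ∈ Finset.Icc 2 k, a i (s.val + 1) • P (k - i)) :
    ∀ k : ℕ, k ≤ n → P k = Lpoly d n (by omega) a k := by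
  intro k
  induction k using Nat.strong_induction_on with
  | _ k ih =>
    intro hkn
    obtain rfl | hk := Nat.eq_zero_or_pos k
    · rw [hP0, Lpoly_zero]
    refine eq_of_constantCoeff_eq_of_pderiv_eq ?_ fun i => ?_
    · rw [hPconst k hk hkn, constantCoeff_Lpoly _ _ hk.ne']
    obtain ⟨_ | t, ht⟩ := i
    · rw [hPx1 k hk hkn, pderiv_Lpoly_zero _ _ hk.ne', ih (k - 1) (by omega) (by omega)]
    · rw [hPxs _ (Nat.le_add_left 1 t) k hk hkn, pderiv_Lpoly_succ _ _ ⟨t, by omega⟩ hkn]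
      exact sum_congr rfl fun i hi => by rw [ih (k - i) (by grind) (by omega)]
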